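/- Let δ ∈ (0, 1/4), let (X, μ) be a finite measure space with μ(X) > 0, let v : X → ℝ be integrable with 0 ≤ v ≤ log(1/(2δ)) and ∫ |v − v̄| dμ / μ(X) ≤ C₀ where v̄ = (1/μ(X)) ∫ v dμ. Suppose μ({v = 0}) ≥ ν·μ(X)/6^N for some ν ∈ (0,1], N ≥ 1. Then μ({v = log(1/(2δ))}) / μ(X) ≤ c·6^N / (ν · log(1/(2δ))) for a constant c depending only on C₀. -/

import Mathlib

/-!
For every constant `c` and level `t`, Markov's inequality gives
`|t - c| · μ{v = t} ≤ ∫ |v - c|`. At the level `0`, whose set fills a fraction `ν / 6^N` of the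
space, this forces `|c| ≤ C₀ · 6^N / ν`; at the level `L = log (1 / (2δ))` it then bounds
`L · μ{v = L}` through `L ≤ |L - c| + |c|`.
-/

open MeasureTheory

namespace MeasureTheory

variable {X : Type*} [MeasurableSpace X] {μ : Measure X} [IsFiniteMeasure μ] {f : X → ℝ}

theorem abs_sub_mul_measureReal_levelSet_le_integral (hf : Integrable f μ) (c t : ℝ) :
    |t - c| * μ.real {x | f x = t} ≤ ∫ x, |f x - c| ∂μ := by
  have hsub : {x | f x = t} ⊆ {x | |t - c| ≤ |f x - c|} := fun x (hx : f x = t) =>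
    show |t - c| ≤ |f x - c| by rw [hx]
  calc |t - c| * μ.real {x | f x = t}
      ≤ |t - c| * μ.real {x | |t - c| ≤ |f x - c|} :=
        mul_le_mul_of_nonneg_left (measureReal_mono hsub) (abs_nonneg _)
    _ ≤ ∫ x, |f x - c| ∂μ :=
      mul_meas_ge_le_integral_of_nonneg (Filter.Eventually.of_forall fun _ => abs_nonneg _)
        ((hf.sub (integrable_const c)).abs) _

theorem abs_sub_mul_measureReal_levelSet_le (hf : Integrable f μ) {a c s t C : ℝ} (ha : 0 < a)
    (hμ : 0 < μ.real Set.univ) (hosc : ∫ x, |f x - c| ∂μ ≤ C * μ.real Set.univ)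
    (hs : a * μ.real Set.univ ≤ μ.real {x | f x = s}) :
    |t - s| * μ.real {x | f x = t} ≤ 2 * C / a * μ.real Set.univ := by
  set A := μ.real Set.univ
  set T := μ.real {x | f x = t}
  have hC : 0 ≤ C := by
    have : 0 ≤ ∫ x, |f x - c| ∂μ := integral_nonneg fun _ => abs_nonneg _
    nlinarith
  have ha1 : a ≤ 1 := by
    have : μ.real {x | f x = s} ≤ A := measureReal_mono (Set.subset_univ _)
    nlinarith
  have hsc : |s - c| ≤ C / a := by
    rw [le_div_iff₀ ha]
    refine le_of_mul_le_mul_right ?_ hμ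
    calc |s - c| * a * A ≤ |s - c| * μ.real {x | f x = s} := by rw [mul_assoc]; gcongr
      _ ≤ C * A := (abs_sub_mul_measureReal_levelSet_le_integral hf c s).trans hosc
  calc |t - s| * T ≤ |t - c| * T + |s - c| * T := by
        rw [← add_mul, abs_sub_comm s c]
        gcongr
        exact abs_sub_le t c s
    _ ≤ C * A + C / a * A :=
        add_le_add ((abs_sub_mul_measureReal_levelSet_le_integral hf c t).trans hosc)
          (mul_le_mul hsc (measureReal_mono (Set.subset_univ _)) measureReal_nonneg
            (div_nonneg hC ha.le))
    _ ≤ 2 * C / a * A := by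
        have : C ≤ C / a := le_div_self hC ha ha1
        rw [mul_div_assoc, two_mul, add_mul]
        gcongr

end MeasureTheory

theorem stmt11_general {X : Type*} [MeasurableSpace X] (μ : Measure X) [IsFiniteMeasure μ]
    (N : ℕ) (δ ν C₀ : ℝ) (hδ : δ ∈ Set.Ioo (0:ℝ) (1/4))
    (hν : ν ∈ Set.Ioc (0:ℝ) 1) (hμ : 0 < (μ Set.univ).toReal)
    (v : X → ℝ) (hv : Integrable v μ)
    (hosc : (∫ x, |v x - (∫ y, v y ∂μ)/(μ Set.univ).toReal| ∂μ) / (μ Set.univ).toReal ≤ C₀)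
    (hzero : ν * (μ Set.univ).toReal / 6^N ≤ (μ {x | v x = 0}).toReal) :
    (μ {x | v x = Real.log (1/(2*δ))}).toReal / (μ Set.univ).toReal
      ≤ (2*C₀) * 6^N / (ν * Real.log (1/(2*δ))) := by
  set L := Real.log (1/(2*δ))
  have hL : 0 < L := Real.log_pos <| by
    rw [lt_div_iff₀ (by linarith [hδ.1])]
    linarith [hδ.2]
  have htop : L * (μ {x | v x = L}).toReal ≤ 2 * C₀ / (ν / 6^N) * (μ Set.univ).toReal := by
    simpa only [sub_zero, abs_of_pos hL, measureReal_def] using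
      abs_sub_mul_measureReal_levelSet_le hv (s := 0) (t := L) (div_pos hν.1 (by positivity)) hμ
        ((div_le_iff₀ hμ).mp hosc) (by rwa [div_mul_eq_mul_div])
  have hrhs : 2 * C₀ * 6^N / (ν * L) = 2 * C₀ / (ν / 6^N) / L := by field_simp
  rw [hrhs, div_le_iff₀ hμ, div_mul_eq_mul_div, le_div_iff₀ hL]
  linarith

theorem stmt11 {X : Type*} [MeasurableSpace X] (μ : Measure X) [IsFiniteMeasure μ]
    (N : ℕ) (hN : 1 ≤ N) (δ ν C₀ : ℝ) (hδ : δ ∈ Set.Ioo (0:ℝ) (1/4))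
    (hν : ν ∈ Set.Ioc (0:ℝ) 1) (hμ : 0 < (μ Set.univ).toReal)
    (v : X → ℝ) (hv : Integrable v μ) (hv0 : ∀ x, 0 ≤ v x)
    (hv1 : ∀ x, v x ≤ Real.log (1/(2*δ)))
    (hosc : (∫ x, |v x - (∫ y, v y ∂μ)/(μ Set.univ).toReal| ∂μ) / (μ Set.univ).toReal ≤ C₀)
    (hzero : ν * (μ Set.univ).toReal / 6^N ≤ (μ {x | v x = 0}).toReal) :
    (μ {x | v x = Real.log (1/(2*δ))}).toReal / (μ Set.univ).toReal
      ≤ (2*C₀) * 6^N / (ν * Real.log (1/(2*δ))) :=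
  stmt11_general μ N δ ν C₀ hδ hν hμ v hv hosc hzero
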